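/- arXiv:2411.11871 — 2 statements merged into one kernel-verified Lean document; each statement's English description precedes it below -/
import Mathlib

section
/- Let g₁, ..., g_M ∈ ℝⁿ and let λ* ∈ Δ^M minimize λ ↦ ‖Σ_m λ_m g_m‖² over the simplex. Set d = Σ_m λ*_m g_m. Then ⟨g_m, d⟩ ≥ ‖d‖² for every m = 1, ..., M. -/
theorem stmt4 {n M : ℕ} (g : Fin M → EuclideanSpace ℝ (Fin n))
    (lstar : Fin M → ℝ) (hstar : lstar ∈ stdSimplex ℝ (Fin M))
    (hmin : ∀ l ∈ stdSimplex ℝ (Fin M),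
      ‖∑ m, lstar m • g m‖ ^ 2 ≤ ‖∑ m, l m • g m‖ ^ 2)
    (d : EuclideanSpace ℝ (Fin n)) (hd : d = ∑ m, lstar m • g m) :
    ∀ m, ‖d‖ ^ 2 ≤ (inner ℝ (g m) d : ℝ) := by
  intro m
  have key : ∀ t : ℝ, 0 < t → t ≤ 1 →
      0 ≤ 2 * (inner ℝ d (g m - d) : ℝ) + t * ‖g m - d‖ ^ 2 := by
    intro t ht ht1
    set l : Fin M → ℝ := fun k => (1 - t) * lstar k + t * (if k = m then 1 else 0) with hl
    have hmem : l ∈ stdSimplex ℝ (Fin M) := by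
      constructor
      · intro k
        have h0 := hstar.1 k
        have h1 : 0 ≤ 1 - t := by linarith
        by_cases hk : k = m <;> simp [hl, hk] <;> nlinarith [hstar.1 m, hstar.1 k]
      · have h2 := hstar.2
        simp only [hl, mul_ite, mul_one, mul_zero]
        rw [Finset.sum_add_distrib, ← Finset.mul_sum, h2,
          Finset.sum_ite_eq' Finset.univ m (fun _ => t)]
        simp
    have hsum : ∑ k, l k • g k = d + t • (g m - d) := by
      have e1 : ∀ k, l k • g k
          = ((1 - t) * lstar k) • g k + (t * (if k = m then 1 else 0)) • g k := by
        intro k; simp [hl, add_smul]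
      rw [Finset.sum_congr rfl (fun k _ => e1 k), Finset.sum_add_distrib]
      have e2 : ∑ k, (t * (if k = m then 1 else 0)) • g k = t • g m := by
        simp only [mul_ite, mul_one, mul_zero, ite_smul, zero_smul]
        rw [Finset.sum_ite_eq' Finset.univ m (fun k => t • g k)]
        simp
      have e3 : ∑ k, ((1 - t) * lstar k) • g k = (1 - t) • d := by
        rw [hd, Finset.smul_sum]
        exact Finset.sum_congr rfl fun k _ => mul_smul _ _ _
      rw [e2, e3, smul_sub, sub_smul, one_smul]
      abel
    have h := hmin l hmem
    rw [hsum, ← hd] at h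
    have expand : ‖d + t • (g m - d)‖ ^ 2
        = ‖d‖ ^ 2 + 2 * (t * (inner ℝ d (g m - d) : ℝ)) + t ^ 2 * ‖g m - d‖ ^ 2 := by
      rw [norm_add_sq_real, real_inner_smul_right, norm_smul]
      simp [abs_of_pos ht]
      ring
    rw [expand] at h
    nlinarith
  have hc : 0 ≤ (inner ℝ d (g m - d) : ℝ) := by
    by_contra hneg
    push_neg at hneg
    set c : ℝ := (inner ℝ d (g m - d) : ℝ) with hcdef
    set B : ℝ := ‖g m - d‖ ^ 2 with hBdef
    have hB : 0 ≤ B := by positivity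
    rcases eq_or_lt_of_le hB with hB0 | hBpos
    · have := key 1 one_pos le_rfl
      nlinarith
    · set t : ℝ := min 1 (-c / B) with htdef
      have htpos : 0 < t := by
        exact lt_min one_pos (div_pos (by linarith) hBpos)
      have ht1 : t ≤ 1 := min_le_left _ _
      have := key t htpos ht1
      have htB : t * B ≤ -c := by
        have : t ≤ -c / B := min_le_right _ _
        calc t * B ≤ (-c / B) * B := by nlinarith
          _ = -c := by field_simp
      nlinarith
  have : (inner ℝ d d : ℝ) ≤ (inner ℝ d (g m) : ℝ) := by
    have := hc
    rw [inner_sub_right] at this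
    linarith
  rw [real_inner_comm]
  rw [real_inner_self_eq_norm_sq] at this
  linarith
end

section
/- Let f₁, ..., f_M : ℝⁿ → ℝ be differentiable at θ and suppose d = Σ_m λ*_m ∇f_m(θ) ≠ 0, where λ* minimizes ‖Σ_m λ_m ∇f_m(θ)‖ over Δ^M. Then for every m, the directional derivative of f_m at θ in direction −d is at most −‖d‖² < 0; in particular θ is not Pareto stationary. -/
theorem stmt5 {n M : ℕ} (f : Fin M → EuclideanSpace ℝ (Fin n) → ℝ)
    (θ : EuclideanSpace ℝ (Fin n))
    (hdiff : ∀ m, DifferentiableAt ℝ (f m) θ)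
    (lstar : Fin M → ℝ) (hstar : lstar ∈ stdSimplex ℝ (Fin M))
    (hmin : ∀ l ∈ stdSimplex ℝ (Fin M),
      ‖∑ m, lstar m • gradient (f m) θ‖ ≤ ‖∑ m, l m • gradient (f m) θ‖)
    (d : EuclideanSpace ℝ (Fin n)) (hd : d = ∑ m, lstar m • gradient (f m) θ)
    (hdne : d ≠ 0) :
    (∀ m, (inner ℝ (gradient (f m) θ) (-d) : ℝ) ≤ -‖d‖ ^ 2) ∧
    -‖d‖ ^ 2 < 0 ∧
    (∃ v : EuclideanSpace ℝ (Fin n), ∀ m, (inner ℝ (gradient (f m) θ) v : ℝ) < 0) := by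
  set g : Fin M → EuclideanSpace ℝ (Fin n) := fun m => gradient (f m) θ with hg
  have hd' : d = ∑ j, lstar j • g j := hd
  have hmin' : ∀ l ∈ stdSimplex ℝ (Fin M),
      ‖∑ j, lstar j • g j‖ ≤ ‖∑ j, l j • g j‖ := hmin
  have hdpos : (0 : ℝ) < ‖d‖ ^ 2 := pow_pos (norm_pos_iff.mpr hdne) 2
  -- key inequality: ‖d‖² ≤ ⟨g m, d⟩
  have key : ∀ m, ‖d‖ ^ 2 ≤ (inner ℝ (g m) d : ℝ) := by
    intro m
    -- For t ∈ [0,1], the convex combination is in the simplex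
    have hineq : ∀ t : ℝ, 0 ≤ t → t ≤ 1 → ‖d‖ ≤ ‖(1 - t) • d + t • g m‖ := by
      intro t ht0 ht1
      have hlmem : (fun j => (1 - t) * lstar j + t * (Pi.single m (1:ℝ) : Fin M → ℝ) j)
          ∈ stdSimplex ℝ (Fin M) := by
        constructor
        · intro j
          have h1 : 0 ≤ lstar j := hstar.1 j
          have h2 : (0:ℝ) ≤ (Pi.single m (1:ℝ) : Fin M → ℝ) j := by
            rcases eq_or_ne j m with rfl | hne
            · simp
            · simp [Pi.single_apply, hne]
          have : (0:ℝ) ≤ 1 - t := by linarith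
          positivity
        · have hsum : ∑ j, (Pi.single m (1:ℝ)) j = 1 := by
            simp [Finset.sum_pi_single]
          have := hstar.2
          simp only [Finset.sum_add_distrib, ← Finset.mul_sum, this, hsum]
          ring
      have := hmin' _ hlmem
      have hrw : ∑ j, ((1 - t) * lstar j + t * (Pi.single m (1:ℝ) : Fin M → ℝ) j) • g j
          = (1 - t) • d + t • g m := by
        have h1 : ∀ j ∈ Finset.univ, ((1 - t) * lstar j + t * (Pi.single m (1:ℝ) : Fin M → ℝ) j) • g j
            = (1 - t) • (lstar j • g j) + (t * (Pi.single m (1:ℝ) : Fin M → ℝ) j) • g j := by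
          intro j _; rw [add_smul, mul_smul]
        rw [Finset.sum_congr rfl h1, Finset.sum_add_distrib, ← Finset.smul_sum, ← hd']
        congr 1
        rw [Finset.sum_eq_single m]
        · simp
        · intro j _ hne; simp [Pi.single_apply, hne]
        · simp
      rw [hrw] at this
      rw [hd'] at this ⊢
      exact this
    -- squared form
    set c : ℝ := inner ℝ d (g m - d) with hc
    set b : ℝ := ‖g m - d‖ ^ 2 with hb
    have hb0 : 0 ≤ b := by positivity
    have hq : ∀ t : ℝ, 0 ≤ t → t ≤ 1 → 0 ≤ 2 * t * c + t ^ 2 * b := by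
      intro t ht0 ht1
      have h := hineq t ht0 ht1
      have hsq : ‖d‖ ^ 2 ≤ ‖(1 - t) • d + t • g m‖ ^ 2 := by
        have := norm_nonneg d
        nlinarith [h]
      have hrw2 : (1 - t) • d + t • g m = d + t • (g m - d) := by
        simp [smul_sub, sub_smul]; abel
      rw [hrw2, norm_add_sq_real] at hsq
      rw [real_inner_smul_right, norm_smul] at hsq
      simp only [Real.norm_eq_abs] at hsq
      have habs : |t| = t := abs_of_nonneg ht0
      rw [habs] at hsq
      nlinarith [hsq]
    -- deduce 0 ≤ c
    have hcnonneg : 0 ≤ c := by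
      by_contra hcneg
      push_neg at hcneg
      rcases eq_or_lt_of_le hb0 with hbeq | hbpos
      · have := hq 1 zero_le_one le_rfl
        nlinarith
      · set t : ℝ := min 1 (-c / b) with htdef
        have htpos : 0 < t := by
          exact lt_min one_pos (div_pos (by linarith) hbpos)
        have ht1 : t ≤ 1 := min_le_left _ _
        have htb : t * b ≤ -c := by
          have : t ≤ -c / b := min_le_right _ _
          calc t * b ≤ (-c / b) * b := by nlinarith
            _ = -c := by field_simp
        have := hq t htpos.le ht1
        nlinarith
    have : (inner ℝ (g m) d : ℝ) = c + ‖d‖ ^ 2 := by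
      rw [hc, inner_sub_right, real_inner_self_eq_norm_sq, real_inner_comm]
      ring
    rw [this]; linarith
  refine ⟨fun m => ?_, by linarith, ⟨-d, fun m => ?_⟩⟩
  · rw [inner_neg_right]
    have := key m
    linarith
  · rw [inner_neg_right]
    have := key m
    linarith
end
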